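/- arXiv:1301.3767 — 7 statements merged into one kernel-verified Lean document; each statement's English description precedes it below -/
import Mathlib

section
/- Let A be the free unital associative ℤ/2-algebra on generators a₁,...,a₅ (degree 1), b₁,...,b₆ (degree 0), c₁,c₂ (degree −1), and let ∂ be the unique derivation (satisfying Leibniz rule ∂(xy)=∂(x)y+x∂(y)) with ∂a₁=1+a₅c₂b₂+b₁b₆+b₂, ∂a₂=1+b₂c₂a₄b₂+b₂c₂b₃a₅+b₆b₄b₂+b₆c₁a₅+b₆+b₂, ∂a₃=1+a₄b₂c₂+b₃a₅c₂+b₃+b₂b₅, ∂a₄=1+b₃b₁+b₂b₄, ∂a₅=b₁b₂, ∂b₁=∂b₂=0, ∂b₃=b₂c₁, ∂b₄=c₁b₁, ∂b₅=b₄b₂c₂+c₁a₅c₂+c₂+c₁, ∂b₆=b₂c₂b₂, ∂c₁=∂c₂=0. Then ∂∘∂=0. -/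
/-- Generators of the Chekanov DGA of m(9₄₆). -/
inductive G : Type
  | a1 | a2 | a3 | a4 | a5 | b1 | b2 | b3 | b4 | b5 | b6 | c1 | c2
  deriving DecidableEq

open G

/-- The free unital associative algebra over ℤ/2 on the 13 generators. -/
noncomputable abbrev A : Type := FreeAlgebra (ZMod 2) G

noncomputable def X (g : G) : A := FreeAlgebra.ι (ZMod 2) g

/-- The values of the Chekanov differential on the generators. -/
noncomputable def D : G → A
  | a1 => 1 + X a5 * X c2 * X b2 + X b1 * X b6 + X b2
  | a2 => 1 + X b2 * X c2 * X a4 * X b2 + X b2 * X c2 * X b3 * X a5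
          + X b6 * X b4 * X b2 + X b6 * X c1 * X a5 + X b6 + X b2
  | a3 => 1 + X a4 * X b2 * X c2 + X b3 * X a5 * X c2 + X b3 + X b2 * X b5
  | a4 => 1 + X b3 * X b1 + X b2 * X b4
  | a5 => X b1 * X b2
  | b1 => 0
  | b2 => 0
  | b3 => X b2 * X c1
  | b4 => X c1 * X b1
  | b5 => X b4 * X b2 * X c2 + X c1 * X a5 * X c2 + X c2 + X c1
  | b6 => X b2 * X c2 * X b2
  | c1 => 0
  | c2 => 0

/-- The Chekanov differential of m(9₄₆) squares to zero: any ℤ/2-linear derivation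
of the free algebra taking the prescribed values on generators satisfies ∂∘∂ = 0. -/
theorem chekanov_differential_squares_to_zero
    (d : A →ₗ[ZMod 2] A)
    (hLeibniz : ∀ u v : A, d (u * v) = d u * v + u * d v)
    (hgen : ∀ g : G, d (X g) = D g) :
    ∀ u : A, d (d u) = 0 := by
  have ht : ∀ z : A, z + z = 0 := by
    intro z
    have h := two_smul (ZMod 2) z
    rw [show ((2 : ZMod 2)) = 0 by decide, zero_smul] at h
    exact h.symm
  have h1 : d 1 = 0 := by
    have h := hLeibniz 1 1
    rw [mul_one, mul_one, one_mul] at h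
    rw [ht] at h
    exact h
  have hd2 : ∀ g : G, d (D g) = 0 := by
    intro g
    cases g <;>
      · simp only [D, map_add, map_zero, map_one, hLeibniz, hgen, h1, mul_add, add_mul,
          mul_assoc, mul_one, one_mul, mul_zero, zero_mul, add_zero, zero_add]
      <;> abel_nf <;> simp [two_mul, ht]
  intro u
  induction u using FreeAlgebra.induction with
  | grade0 r =>
      rw [Algebra.algebraMap_eq_smul_one, map_smul, h1, smul_zero, map_zero]
  | grade1 g => show d (d (X g)) = 0; rw [hgen, hd2]
  | mul u v hu hv =>
      rw [hLeibniz, map_add, hLeibniz, hLeibniz, hu, hv]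
      simp [ht]
  | add u v hu hv => rw [map_add, map_add, hu, hv, add_zero]
end

section
/- The unital ℤ/2-algebra homomorphism ε₁: A → ℤ/2 determined on generators by ε₁(b₂)=ε₁(b₄)=ε₁(b₅)=1 and ε₁(x)=0 for all other generators x satisfies ε₁∘∂=0; i.e., ε₁ is an augmentation of the Chekanov DGA of m(9₄₆). -/
open G

/-- The augmentation ε₁, taking the value 1 on b₂, b₄, b₅ and 0 on all other generators. -/
noncomputable def eps1 : A →ₐ[ZMod 2] ZMod 2 :=
  FreeAlgebra.lift (ZMod 2) (fun g => match g with
    | b2 | b4 | b5 => (1 : ZMod 2)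
    | _ => 0)

/-- ε₁ is an augmentation of the Chekanov DGA of m(9₄₆): ε₁ ∘ ∂ = 0. -/
theorem eps1_is_augmentation
    (d : A →ₗ[ZMod 2] A)
    (hLeibniz : ∀ u v : A, d (u * v) = d u * v + u * d v)
    (hgen : ∀ g : G, d (X g) = D g) :
    ∀ u : A, eps1 (d u) = 0 := by
  have h1 : d 1 = 0 := by
    have h := hLeibniz 1 1
    simp only [one_mul, mul_one] at h
    nth_rewrite 1 [← add_zero (d 1)] at h
    exact (add_left_cancel h).symm
  intro u
  induction u using FreeAlgebra.induction with
  | grade0 r =>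
      rw [Algebra.algebraMap_eq_smul_one, map_smul, h1, smul_zero, map_zero]
  | grade1 g =>
      rw [show (FreeAlgebra.ι (ZMod 2) g : A) = X g from rfl, hgen g]
      cases g <;>
        simp [D, eps1, X, FreeAlgebra.lift_ι_apply] <;> decide
  | mul a b ha hb =>
      rw [hLeibniz, map_add, map_mul, map_mul, ha, hb, zero_mul, mul_zero, add_zero]
  | add a b ha hb =>
      rw [map_add, map_add, ha, hb, add_zero]
end

section
/- The unital ℤ/2-algebra homomorphism ε₂: A → ℤ/2 determined on generators by ε₂(b₁)=ε₂(b₃)=ε₂(b₆)=1 and ε₂(x)=0 for all other generators x satisfies ε₂∘∂=0; i.e., ε₂ is an augmentation of the Chekanov DGA of m(9₄₆). -/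
open G

/-- The augmentation ε₂, taking the value 1 on b₁, b₃, b₆ and 0 on all other generators. -/
noncomputable def eps2 : A →ₐ[ZMod 2] ZMod 2 :=
  FreeAlgebra.lift (ZMod 2) (fun g => match g with
    | b1 | b3 | b6 => (1 : ZMod 2)
    | _ => 0)

/-- ε₂ is an augmentation of the Chekanov DGA of m(9₄₆): ε₂ ∘ ∂ = 0. -/
theorem eps2_is_augmentation
    (d : A →ₗ[ZMod 2] A)
    (hLeibniz : ∀ u v : A, d (u * v) = d u * v + u * d v)
    (hgen : ∀ g : G, d (X g) = D g) :
    ∀ u : A, eps2 (d u) = 0 := by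
  have h1 : d 1 = 0 := by
    have h := hLeibniz 1 1
    simp only [one_mul, mul_one] at h
    have := congrArg (· - d 1) h
    simpa using this.symm
  intro u
  induction u using FreeAlgebra.induction with
  | grade0 r =>
      rw [Algebra.algebraMap_eq_smul_one, map_smul, h1, smul_zero, map_zero]
  | grade1 g =>
      rw [show FreeAlgebra.ι (ZMod 2) g = X g from rfl, hgen]
      cases g <;> simp [D, X, eps2, FreeAlgebra.lift_ι_apply] <;> decide
  | mul u v hu hv =>
      rw [hLeibniz, map_add, map_mul, map_mul, hu, hv, zero_mul, mul_zero, add_zero]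
  | add u v hu hv =>
      rw [map_add, map_add, hu, hv, add_zero]
end

section
/- The Chekanov DGA of m(9₄₆) has exactly 8 graded augmentations. More precisely, a unital algebra homomorphism ε: A → ℤ/2 vanishing on all generators of nonzero degree (i.e., ε(aᵢ)=ε(cⱼ)=0) satisfies ε∘∂=0 if and only if the values xᵢ=ε(bᵢ) ∈ ℤ/2 satisfy the system 1+x₁x₆+x₂=0, 1+x₆x₄x₂+x₆+x₂=0, 1+x₃+x₂x₅=0, 1+x₃x₁+x₂x₄=0, x₁x₂=0; the solution set is { (0,1,1+t,1,t,s) : s,t ∈ ℤ/2 } ∪ { (1,0,1,u,v,1) : u,v ∈ ℤ/2 } and has exactly 8 elements. -/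
open G

/-- The system of polynomial equations over ℤ/2 cutting out the graded augmentations. -/
def sys (x1 x2 x3 x4 x5 x6 : ZMod 2) : Prop :=
  1 + x1 * x6 + x2 = 0 ∧
  1 + x6 * x4 * x2 + x6 + x2 = 0 ∧
  1 + x3 + x2 * x5 = 0 ∧
  1 + x3 * x1 + x2 * x4 = 0 ∧
  x1 * x2 = 0

/-- The solution set of the system, as a set of 6-tuples. -/
def solSet : Set (ZMod 2 × ZMod 2 × ZMod 2 × ZMod 2 × ZMod 2 × ZMod 2) :=
  {p | sys p.1 p.2.1 p.2.2.1 p.2.2.2.1 p.2.2.2.2.1 p.2.2.2.2.2}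

theorem map_one_eq_zero_of_leibniz {R B : Type*} [Semiring R] [Ring B] [Module R B]
    (d : B →ₗ[R] B) (hd : ∀ u v, d (u * v) = d u * v + u * d v) : d 1 = 0 := by
  simpa using hd 1 1

theorem FreeAlgebra.forall_map_leibniz_eq_zero_iff {R X B : Type*} [CommRing R] [Semiring B]
    [Algebra R B] (d : FreeAlgebra R X →ₗ[R] FreeAlgebra R X) (hd : ∀ u v, d (u * v) = d u * v + u * d v)
    (ε : FreeAlgebra R X →ₐ[R] B) :
    (∀ u, ε (d u) = 0) ↔ ∀ x, ε (d (FreeAlgebra.ι R x)) = 0 := by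
  refine ⟨fun h x => h _, fun h u => ?_⟩
  induction u using FreeAlgebra.induction with
  | grade0 r =>
    rw [Algebra.algebraMap_eq_smul_one, map_smul, map_one_eq_zero_of_leibniz d hd, smul_zero,
      map_zero]
  | grade1 x => exact h x
  | mul u v hu hv => rw [hd, map_add, map_mul, map_mul, hu, hv, zero_mul, mul_zero, add_zero]
  | add u v hu hv => rw [map_add, map_add, hu, hv, add_zero]

/-- The graded augmentation with `ε (bᵢ) = xᵢ` (arguments of `G.rec` in the order
`a₁, …, a₅, b₁, …, b₆, c₁, c₂`). -/
noncomputable def gradedAug (x1 x2 x3 x4 x5 x6 : ZMod 2) : A →ₐ[ZMod 2] ZMod 2 :=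
  FreeAlgebra.lift (ZMod 2) fun g => G.rec 0 0 0 0 0 x1 x2 x3 x4 x5 x6 0 0 g

theorem gradedAug_D_eq_zero_iff (x1 x2 x3 x4 x5 x6 : ZMod 2) :
    (∀ g, gradedAug x1 x2 x3 x4 x5 x6 (D g) = 0) ↔ sys x1 x2 x3 x4 x5 x6 := by
  constructor
  · intro h
    have h1 := h a1; have h2 := h a2; have h3 := h a3; have h4 := h a4; have h5 := h a5
    simp only [gradedAug, D, X, map_add, map_mul, map_one, FreeAlgebra.lift_ι_apply, mul_zero,
      zero_mul, add_zero] at h1 h2 h3 h4 h5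
    exact ⟨h1, h2, h3, h4, h5⟩
  · rintro ⟨h1, h2, h3, h4, h5⟩ g
    cases g <;> simp only [gradedAug, D, X, map_add, map_mul, map_one, map_zero,
      FreeAlgebra.lift_ι_apply, mul_zero, zero_mul, add_zero] <;> assumption

theorem sys_iff (x1 x2 x3 x4 x5 x6 : ZMod 2) :
    sys x1 x2 x3 x4 x5 x6 ↔
      (x1 = 0 ∧ x2 = 1 ∧ x3 = 1 + x5 ∧ x4 = 1) ∨ (x1 = 1 ∧ x2 = 0 ∧ x3 = 1 ∧ x6 = 1) := by
  revert x1 x2 x3 x4 x5 x6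
  unfold sys
  set_option synthInstance.maxSize 1000 in decide

theorem solSet_eq :
    solSet = ({p | ∃ s t : ZMod 2, p = (0, 1, 1 + t, 1, t, s)} ∪
              {p | ∃ u v : ZMod 2, p = (1, 0, 1, u, v, 1)}) := by
  ext ⟨x1, x2, x3, x4, x5, x6⟩
  simp only [solSet, sys_iff, Set.mem_ofPred_eq, Set.mem_union, Prod.mk.injEq]
  constructor
  · rintro (⟨rfl, rfl, rfl, rfl⟩ | ⟨rfl, rfl, rfl, rfl⟩)
    · exact Or.inl ⟨x6, x5, rfl, rfl, rfl, rfl, rfl, rfl⟩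
    · exact Or.inr ⟨x4, x5, rfl, rfl, rfl, rfl, rfl, rfl⟩
  · rintro (⟨s, t, rfl, rfl, rfl, rfl, rfl, rfl⟩ | ⟨u, v, rfl, rfl, rfl, rfl, rfl, rfl⟩)
    · exact Or.inl ⟨rfl, rfl, rfl, rfl⟩
    · exact Or.inr ⟨rfl, rfl, rfl, rfl⟩

theorem ncard_solSet : solSet.ncard = 8 := by
  rw [solSet_eq, Set.ncard_eq_toFinset_card']
  decide

/-- The Chekanov DGA of m(9₄₆) has exactly 8 graded augmentations: a unital algebra map
ε : A → ℤ/2 vanishing on the generators of nonzero degree satisfies ε ∘ ∂ = 0 if and only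
if its values xᵢ = ε(bᵢ) satisfy the displayed system; the solution set is the displayed
set and has exactly 8 elements. -/
theorem graded_augmentations_of_m946 :
    (∀ x1 x2 x3 x4 x5 x6 : ZMod 2, ∀ d : A →ₗ[ZMod 2] A,
      (∀ u v : A, d (u * v) = d u * v + u * d v) →
      (∀ g : G, d (X g) = D g) →
      ((∀ u : A,
          (FreeAlgebra.lift (ZMod 2) (fun g => match g with
            | b1 => x1 | b2 => x2 | b3 => x3 | b4 => x4 | b5 => x5 | b6 => x6
            | _ => (0 : ZMod 2)) : A →ₐ[ZMod 2] ZMod 2) (d u) = 0)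
        ↔ sys x1 x2 x3 x4 x5 x6)) ∧
    solSet = ({p | ∃ s t : ZMod 2, p = (0, 1, 1 + t, 1, t, s)} ∪
              {p | ∃ u v : ZMod 2, p = (1, 0, 1, u, v, 1)}) ∧
    Set.ncard solSet = 8 := by
  refine ⟨fun x1 x2 x3 x4 x5 x6 d hd hdX => ?_, solSet_eq, ncard_solSet⟩
  calc _ ↔ ∀ u, gradedAug x1 x2 x3 x4 x5 x6 (d u) = 0 := by
        unfold gradedAug
        congr! 5 with _ g
        cases g <;> rfl
    _ ↔ ∀ g, gradedAug x1 x2 x3 x4 x5 x6 (D g) = 0 := by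
        rw [FreeAlgebra.forall_map_leibniz_eq_zero_iff d hd]
        exact forall_congr' fun g => by rw [← hdX g]; rfl
    _ ↔ _ := gradedAug_D_eq_zero_iff x1 x2 x3 x4 x5 x6
end

section
/- Let A₀ be the free unital associative ℤ/2-algebra on one generator a₀ of degree 1 with differential ∂₀=0 (the Chekanov DGA of the standard Legendrian unknot Λ₀), and let A be the Chekanov DGA of m(9₄₆). The unital algebra homomorphism φ: A → A₀ determined on generators by φ(a₂)=a₀, φ(b₂)=φ(b₄)=φ(b₅)=1, and φ(x)=0 for all other generators x, is a DGA morphism: φ∘∂ = ∂₀∘φ. -/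
open G

/-- The Chekanov DGA of the standard Legendrian unknot: the free unital ℤ/2-algebra
on one generator a₀ (the differential is zero). -/
noncomputable abbrev A0 : Type := FreeAlgebra (ZMod 2) Unit

noncomputable def a0 : A0 := FreeAlgebra.ι (ZMod 2) ()

/-- The map induced by the Lagrangian concordance C from Λ₀ to m(9₄₆):
φ(a₂) = a₀, φ(b₂) = φ(b₄) = φ(b₅) = 1, all other generators to 0. -/
noncomputable def phi : A →ₐ[ZMod 2] A0 :=
  FreeAlgebra.lift (ZMod 2) (fun g => match g with
    | a2 => a0
    | b2 | b4 | b5 => (1 : A0)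
    | _ => 0)

/-- φ is a DGA morphism: since the differential of the unknot DGA is zero,
φ ∘ ∂ = ∂₀ ∘ φ = 0. -/
theorem phi_is_DGA_morphism
    (d : A →ₗ[ZMod 2] A)
    (hLeibniz : ∀ u v : A, d (u * v) = d u * v + u * d v)
    (hgen : ∀ g : G, d (X g) = D g)
    (d0 : A0 →ₗ[ZMod 2] A0) (hd0 : d0 = 0) :
    ∀ u : A, phi (d u) = d0 (phi u) := by
  subst hd0
  have h1 : d 1 = 0 := by
    have h := hLeibniz 1 1
    simp only [one_mul, mul_one] at h
    exact (left_eq_add.mp h)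
  have h2 : (1 : A0) + 1 = 0 := by
    rw [← map_one (algebraMap (ZMod 2) A0), ← map_add]
    have hz : (1 + 1 : ZMod 2) = 0 := by decide
    rw [hz, map_zero]
  intro u
  simp only [LinearMap.zero_apply]
  induction u using FreeAlgebra.induction with
  | grade0 r =>
      rw [Algebra.algebraMap_eq_smul_one, map_smul, h1, smul_zero, map_zero]
  | grade1 g =>
      rw [show FreeAlgebra.ι (ZMod 2) g = X g from rfl, hgen]
      cases g <;> simp [D, phi, X, a0, h2]
  | mul u v hu hv =>
      rw [hLeibniz, map_add, map_mul, map_mul, hu, hv, zero_mul, mul_zero, add_zero]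
  | add u v hu hv =>
      rw [map_add, map_add, hu, hv, add_zero]
end

section
/- Let (A,∂) be the tensor algebra over ℤ/2 on a finite set R of generators with differential ∂ satisfying ∂²=0 and the Leibniz rule, and let ε₁, ε₂ be two augmentations of A. Define the bilinearized differential d^{ε₁,ε₂}: V → V on the ℤ/2-vector space V spanned by R as follows: for a generator a and each word r₁r₂⋯r_k appearing in ∂a, add Σⱼ ε₁(r₁)⋯ε₁(r_{j−1})·ε₂(r_{j+1})⋯ε₂(r_k)·rⱼ to d^{ε₁,ε₂}a (a word of length 0, i.e., a constant 1, contributes nothing). Then d^{ε₁,ε₂} ∘ d^{ε₁,ε₂} = 0. -/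
open scoped BigOperators

variable {R : Type*} [Fintype R] [DecidableEq R]

/-- The tensor algebra over ℤ/2 on the generator set `R`, realized as the monoid algebra
of the free monoid on `R`, so that elements are ℤ/2-combinations of words. -/
noncomputable abbrev TA (R : Type*) : Type _ := MonoidAlgebra (ZMod 2) (FreeMonoid R)

/-- The generator of the tensor algebra corresponding to `r : R`. -/
noncomputable def gen (r : R) : TA R := MonoidAlgebra.of (ZMod 2) (FreeMonoid R) (FreeMonoid.of r)

/-- The contribution of a single word `w` to the bilinearized differential, in the
direction of the generator `r`: the sum over occurrences of `r` in `w` of the product of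
the `e1`-values of the letters to the left and the `e2`-values of the letters to the
right.  (Words of length 0 contribute nothing.) -/
def wordContrib (e1 e2 : R → ZMod 2) (w : FreeMonoid R) (r : R) : ZMod 2 :=
  ∑ j : Fin w.toList.length,
    if w.toList.get j = r then
      ((w.toList.take (j : ℕ)).map e1).prod * ((w.toList.drop ((j : ℕ) + 1)).map e2).prod
    else 0

/-- The matrix of the bilinearized differential `d^{ε₁,ε₂}` on the ℤ/2-vector space
spanned by `R`: the coefficient of the generator `r` in `d^{ε₁,ε₂} a`. -/
noncomputable def dmat (d : TA R →ₗ[ZMod 2] TA R) (e1 e2 : R → ZMod 2) (a r : R) : ZMod 2 :=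
  (d (gen a)).coeff.sum fun w c => c * wordContrib e1 e2 w r

/-! The coordinate functionals `φ_r` of the bilinearized linear part are `(ε₁, ε₂)`-derivations:
`φ_r (u v) = φ_r u · ε₂ v + ε₁ u · φ_r v`. Such derivations `ψ` of the free algebra are determined
by their values on the generators, so `ψ = ∑ m, ψ (gen m) • φ_m`. As `ε₁, ε₂` vanish
on the image of `∂`, `φ_r ∘ ∂` is again a derivation, whence `φ_r ∘ ∂ = ∑ m, d_{m r} • φ_m`.
Evaluating at `∂ a` and using `∂² = 0` gives `∑ m, d_{a m} d_{m r} = 0`. -/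

def IsTwistedDerivation {k A : Type*} [CommRing k] [Semiring A] [Algebra k A]
    (ε1 ε2 : A →ₐ[k] k) (φ : A →ₗ[k] k) : Prop :=
  ∀ u v, φ (u * v) = φ u * ε2 v + ε1 u * φ v

namespace IsTwistedDerivation

variable {k A : Type*} [CommRing k] [Semiring A] [Algebra k A] {ε1 ε2 : A →ₐ[k] k}
  {φ ψ : A →ₗ[k] k}

theorem map_one (hφ : IsTwistedDerivation ε1 ε2 φ) : φ 1 = 0 := by
  have h := hφ 1 1
  simp only [mul_one, _root_.map_one, one_mul] at h
  exact left_eq_add.mp h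

theorem map_algebraMap (hφ : IsTwistedDerivation ε1 ε2 φ) (c : k) :
    φ (algebraMap k A c) = 0 := by
  rw [Algebra.algebraMap_eq_smul_one, map_smul, hφ.map_one, smul_zero]

theorem sum_smul {ι : Type*} (s : Finset ι) (c : ι → k) {φ : ι → A →ₗ[k] k}
    (hφ : ∀ i ∈ s, IsTwistedDerivation ε1 ε2 (φ i)) :
    IsTwistedDerivation ε1 ε2 (∑ i ∈ s, c i • φ i) := by
  intro u v
  simp only [LinearMap.sum_apply, LinearMap.smul_apply, smul_eq_mul,
    Finset.sum_mul, Finset.mul_sum, ← Finset.sum_add_distrib]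
  exact Finset.sum_congr rfl fun i hi => by rw [hφ i hi]; ring

theorem comp (hφ : IsTwistedDerivation ε1 ε2 φ) (d : A →ₗ[k] A)
    (hd : ∀ u v, d (u * v) = d u * v + u * d v)
    (hε1 : ∀ u, ε1 (d u) = 0) (hε2 : ∀ u, ε2 (d u) = 0) :
    IsTwistedDerivation ε1 ε2 (φ ∘ₗ d) := by
  intro u v
  simp only [LinearMap.comp_apply, hd, map_add]
  rw [hφ, hφ, hε1, hε2]
  ring

theorem ext_of_adjoin_eq_top (hφ : IsTwistedDerivation ε1 ε2 φ)
    (hψ : IsTwistedDerivation ε1 ε2 ψ) {s : Set A} (hs : Algebra.adjoin k s = ⊤)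
    (h : ∀ x ∈ s, φ x = ψ x) : φ = ψ := by
  ext u
  have hu : u ∈ Algebra.adjoin k s := hs ▸ Algebra.mem_top
  induction hu using Algebra.adjoin_induction with
  | mem x hx => exact h x hx
  | algebraMap c => rw [hφ.map_algebraMap, hψ.map_algebraMap]
  | add x y _ _ hx hy => rw [map_add, map_add, hx, hy]
  | mul x y _ _ hx hy => rw [hφ, hψ, hx, hy]

end IsTwistedDerivation

theorem adjoin_range_gen {X : Type*} :
    Algebra.adjoin (ZMod 2) (Set.range (gen : X → TA X)) = ⊤ := by
  rw [eq_top_iff]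
  rintro u -
  induction u using MonoidAlgebra.induction_on with
  | of w =>
    induction w using FreeMonoid.inductionOn' with
    | one => exact one_mem _
    | of_mul x w ih =>
      rw [map_mul]
      exact mul_mem (Algebra.subset_adjoin ⟨x, rfl⟩) ih
  | add u v hu hv => exact add_mem hu hv
  | smul c u hu => exact Subalgebra.smul_mem _ hu c

theorem algHom_of_eq_prod {X : Type*} (ε : TA X →ₐ[ZMod 2] ZMod 2) (w : FreeMonoid X) :
    ε (MonoidAlgebra.of (ZMod 2) _ w) = (w.toList.map fun x => ε (gen x)).prod := by
  induction w using FreeMonoid.inductionOn' with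
  | one => rw [map_one, map_one]; rfl
  | of_mul x w ih => rw [map_mul, map_mul, ih]; rfl

theorem algHom_single_eq_mul_prod {X : Type*} (ε : TA X →ₐ[ZMod 2] ZMod 2) (w : FreeMonoid X)
    (c : ZMod 2) :
    ε (MonoidAlgebra.single w c) = c * (w.toList.map fun x => ε (gen x)).prod := by
  rw [← algHom_of_eq_prod, MonoidAlgebra.of_apply, ← smul_eq_mul, ← map_smul,
    MonoidAlgebra.smul_single, smul_eq_mul, mul_one]

section Bilinearized

variable {X : Type*} [DecidableEq X] (e1 e2 : X → ZMod 2)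

theorem wordContrib_one (r : X) : wordContrib e1 e2 1 r = 0 := by
  rfl

theorem wordContrib_of_mul (a : X) (w : FreeMonoid X) (r : X) :
    wordContrib e1 e2 (FreeMonoid.of a * w) r =
      (if a = r then (w.toList.map e2).prod else 0) + e1 a * wordContrib e1 e2 w r := by
  unfold wordContrib
  refine (Fin.sum_univ_succ (n := w.toList.length) _).trans ?_
  simp [Finset.mul_sum, mul_ite, mul_assoc]

theorem wordContrib_of (a r : X) :
    wordContrib e1 e2 (FreeMonoid.of a) r = if a = r then 1 else 0 := by
  simpa [wordContrib_one] using wordContrib_of_mul e1 e2 a 1 r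

theorem wordContrib_mul (u v : FreeMonoid X) (r : X) :
    wordContrib e1 e2 (u * v) r =
      wordContrib e1 e2 u r * (v.toList.map e2).prod +
        (u.toList.map e1).prod * wordContrib e1 e2 v r := by
  induction u using FreeMonoid.inductionOn' with
  | one => simp [wordContrib_one]
  | of_mul a u ih =>
    rw [mul_assoc, wordContrib_of_mul, wordContrib_of_mul, ih]
    simp only [FreeMonoid.toList_mul, FreeMonoid.toList_of, List.map_append, List.prod_append,
      List.map_singleton, List.prod_singleton]
    split_ifs <;> ring

noncomputable def linearPart (r : X) : TA X →ₗ[ZMod 2] ZMod 2 :=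
  Finsupp.linearCombination (ZMod 2) (fun w => wordContrib e1 e2 w r) ∘ₗ
    (MonoidAlgebra.coeffLinearEquiv (ZMod 2)).toLinearMap

theorem linearPart_single (r : X) (w : FreeMonoid X) (c : ZMod 2) :
    linearPart e1 e2 r (MonoidAlgebra.single w c) = c * wordContrib e1 e2 w r := by
  simp [linearPart]

theorem linearPart_gen (a r : X) : linearPart e1 e2 r (gen a) = if a = r then 1 else 0 := by
  rw [gen, MonoidAlgebra.of_apply, linearPart_single, wordContrib_of, one_mul]

theorem dmat_eq_linearPart (d : TA X →ₗ[ZMod 2] TA X) (a r : X) :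
    dmat d e1 e2 a r = linearPart e1 e2 r (d (gen a)) := by
  simp [linearPart, dmat, Finsupp.linearCombination_apply]

theorem isTwistedDerivation_linearPart (ε1 ε2 : TA X →ₐ[ZMod 2] ZMod 2) (r : X) :
    IsTwistedDerivation ε1 ε2 (linearPart (fun x => ε1 (gen x)) (fun x => ε2 (gen x)) r) := by
  intro u v
  induction u using MonoidAlgebra.induction_linear with
  | zero => simp
  | add u u' hu hu' => simp only [add_mul, map_add, hu, hu']; ring
  | single w c =>
    induction v using MonoidAlgebra.induction_linear with
    | zero => simp
    | add v v' hv hv' => simp only [mul_add, map_add, hv, hv']; ring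
    | single w' c' =>
      rw [MonoidAlgebra.single_mul_single, linearPart_single, linearPart_single, linearPart_single,
        algHom_single_eq_mul_prod, algHom_single_eq_mul_prod, wordContrib_mul]
      ring

theorem IsTwistedDerivation.eq_sum_linearPart [Fintype X] {ε1 ε2 : TA X →ₐ[ZMod 2] ZMod 2}
    {ψ : TA X →ₗ[ZMod 2] ZMod 2} (hψ : IsTwistedDerivation ε1 ε2 ψ) :
    ψ = ∑ m, ψ (gen m) • linearPart (fun x => ε1 (gen x)) (fun x => ε2 (gen x)) m := by
  refine hψ.ext_of_adjoin_eq_top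
    (IsTwistedDerivation.sum_smul _ _ fun m _ => isTwistedDerivation_linearPart ε1 ε2 m)
    adjoin_range_gen ?_
  rintro _ ⟨a, rfl⟩
  simp [linearPart_gen]

end Bilinearized

/-- The bilinearized differential squares to zero: if `∂` is a differential on the tensor
algebra (Leibniz rule, `∂² = 0`) and `ε₁, ε₂` are augmentations, then
`d^{ε₁,ε₂} ∘ d^{ε₁,ε₂} = 0`. -/
theorem bilinearized_differential_squares_to_zero
    (d : TA R →ₗ[ZMod 2] TA R)
    (hLeibniz : ∀ u v : TA R, d (u * v) = d u * v + u * d v)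
    (h2 : ∀ u : TA R, d (d u) = 0)
    (ε1 ε2 : TA R →ₐ[ZMod 2] ZMod 2)
    (hε1 : ∀ u : TA R, ε1 (d u) = 0) (hε2 : ∀ u : TA R, ε2 (d u) = 0) :
    ∀ a r : R,
      (∑ m : R, dmat d (fun g => ε1 (gen g)) (fun g => ε2 (gen g)) a m *
                dmat d (fun g => ε1 (gen g)) (fun g => ε2 (gen g)) m r) = 0 := by
  intro a r
  set φ := linearPart (fun g => ε1 (gen g)) (fun g => ε2 (gen g))
  have hψ : IsTwistedDerivation ε1 ε2 (φ r ∘ₗ d) :=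
    (isTwistedDerivation_linearPart ε1 ε2 r).comp d hLeibniz hε1 hε2
  calc ∑ m, dmat d _ _ a m * dmat d _ _ m r
      = (∑ m, (φ r ∘ₗ d) (gen m) • φ m) (d (gen a)) := by
        simp [dmat_eq_linearPart, φ, LinearMap.sum_apply, mul_comm]
    _ = φ r (d (d (gen a))) := by rw [← hψ.eq_sum_linearPart]; rfl
    _ = 0 := by rw [h2, map_zero]
end

section
/- For the cochain complex with basis a₁,...,a₅ (degree 1), b₁,...,b₆ (degree 0), c₁,c₂ (degree −1) and differential μ¹ given by μ¹(b₁)=a₄+a₅, μ¹(b₂)=a₁+a₃+a₄+a₅, μ¹(b₃)=a₃, μ¹(b₄)=a₂, μ¹(b₅)=0, μ¹(b₆)=a₁+a₂, μ¹(c₁)=b₅, μ¹(c₂)=b₅, μ¹(aᵢ)=0, the cohomology in degree −1 is 1-dimensional, generated by the class of c₁+c₂. In particular this bilinearized cohomology (for the pair (ε₁,ε₂)) differs in degree −1 from the linearized cohomology of ε₁ alone, which vanishes in degree −1; hence the augmentations ε₁ and ε₂ of the Chekanov DGA of m(9₄₆) are not equivalent. -/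
instance instFintypeG : Fintype G :=
  Fintype.ofList [G.a1, G.a2, G.a3, G.a4, G.a5, G.b1, G.b2, G.b3, G.b4, G.b5, G.b6, G.c1, G.c2]
    (by intro x; cases x <;> simp)

open G

/-- The ℤ/2-vector space with basis the 13 generators. -/
abbrev V : Type := G → ZMod 2

/-- The basis vector corresponding to a generator. -/
def e (g : G) : V := Pi.single g 1

/-- The span of the degree-1 basis vectors a₁, ..., a₅. -/
def spanA : Submodule (ZMod 2) V :=
  Submodule.span (ZMod 2) {e a1, e a2, e a3, e a4, e a5}

/-- The span of the degree-0 basis vectors b₁, ..., b₆. -/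
def spanB : Submodule (ZMod 2) V :=
  Submodule.span (ZMod 2) {e b1, e b2, e b3, e b4, e b5, e b6}

/-- The span of the degree-(−1) basis vectors c₁, c₂. -/
def spanC : Submodule (ZMod 2) V :=
  Submodule.span (ZMod 2) {e c1, e c2}

/-- The differential μ¹ = μ¹_{ε₁,ε₁} of the ε₁-linearized Legendrian contact cohomology
complex of m(9₄₆), on basis vectors. -/
def row1 : G → V
  | b1 => e a5
  | b2 => e a1 + e a2 + e a3 + e a4
  | b3 => e a3
  | b4 => e a4
  | b5 => e a3
  | b6 => 0
  | c1 => e b3 + e b5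
  | c2 => e b6
  | _ => 0

/-- μ¹_{ε₁,ε₁} as a linear endomorphism of V. -/
noncomputable def mu1 : V →ₗ[ZMod 2] V :=
  Matrix.mulVecLin (fun r g => row1 g r)

/-- The differential μ¹_{ε₁,ε₂} of the (ε₁,ε₂)-bilinearized Legendrian contact cohomology
complex of m(9₄₆), on basis vectors. -/
def row12 : G → V
  | b1 => e a4 + e a5
  | b2 => e a1 + e a3 + e a4 + e a5
  | b3 => e a3
  | b4 => e a2
  | b5 => 0
  | b6 => e a1 + e a2
  | c1 => e b5
  | c2 => e b5
  | _ => 0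

/-- μ¹_{ε₁,ε₂} as a linear endomorphism of V. -/
noncomputable def mu12 : V →ₗ[ZMod 2] V :=
  Matrix.mulVecLin (fun r g => row12 g r)

theorem Matrix.mulVecLin_single_one_of_cols {m n R : Type*} [Fintype n] [DecidableEq n]
    [CommSemiring R] (col : n → m → R) (j : n) :
    Matrix.mulVecLin (fun i j => col j i) (Pi.single j 1) = col j :=
  Matrix.mulVec_single_one _ j

theorem e_apply (g h : G) : e g h = if h = g then 1 else 0 :=
  Pi.single_apply g 1 h

theorem e_ne_zero (g : G) : e g ≠ 0 :=
  Pi.single_ne_zero_iff.mpr one_ne_zero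

theorem mu1_e (g : G) : mu1 (e g) = row1 g :=
  Matrix.mulVecLin_single_one_of_cols _ g

theorem mu12_e (g : G) : mu12 (e g) = row12 g :=
  Matrix.mulVecLin_single_one_of_cols _ g

theorem mu12_smul_c1_add_smul_c2 (a b : ZMod 2) :
    mu12 (a • e c1 + b • e c2) = (a + b) • e b5 := by
  simp only [map_add, map_smul, mu12_e, row12, add_smul]

theorem mu1_smul_c1_add_smul_c2 (a b : ZMod 2) :
    mu1 (a • e c1 + b • e c2) = a • (e b3 + e b5) + b • e b6 := by
  simp only [map_add, map_smul, mu1_e, row1]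

/-- The degree-(−1) cohomology of the (ε₁,ε₂)-bilinearized complex is one-dimensional,
generated by the class of c₁ + c₂ (the kernel of μ¹_{ε₁,ε₂} on span{c₁,c₂} is
span{c₁ + c₂}), while for the ε₁-linearized complex the kernel in degree −1 is zero;
hence the two augmentations ε₁ and ε₂ are not equivalent. -/
theorem degree_minus_one_cohomology_distinguishes_augmentations :
    (∀ v ∈ spanC, (mu12 v = 0 ↔ ∃ c : ZMod 2, v = c • (e c1 + e c2))) ∧
    (∀ v ∈ spanC, mu1 v = 0 → v = 0) := by
  constructor
  · intro v hv
    obtain ⟨a, b, rfl⟩ := Submodule.mem_span_pair.mp hv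
    rw [mu12_smul_c1_add_smul_c2, smul_eq_zero_iff_left (e_ne_zero b5), CharTwo.add_eq_zero]
    constructor
    · rintro rfl
      exact ⟨a, (smul_add a _ _).symm⟩
    · rintro ⟨c, hc⟩
      have hac : a = c := by simpa [e_apply] using congrFun hc c1
      have hbc : b = c := by simpa [e_apply] using congrFun hc c2
      rw [hac, hbc]
  · intro v hv hv0
    obtain ⟨a, b, rfl⟩ := Submodule.mem_span_pair.mp hv
    rw [mu1_smul_c1_add_smul_c2] at hv0
    have ha : a = 0 := by simpa [e_apply] using congrFun hv0 b3
    have hb : b = 0 := by simpa [e_apply] using congrFun hv0 b6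
    rw [ha, hb, zero_smul, zero_smul, add_zero]
end
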